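/- Given Γ : Type, Φ : Γ → Prop with cof (Φ x) for all x, a family A : Γ|Φ → Type with fibration structure α : isFib A, a family B : Γ → Type with fibration structure β : isFib B, and f : (x : Γ) → (u : [Φ x]) → A ⟨x, u⟩ → B x with equivalence structures (x : Γ) → (u : [Φ x]) → Equiv (f x u), there exist a family G : Γ → Type and a fibration structure γ : isFib G such that G ∘ ι = A (that is, G x = A ⟨x, u⟩ for all x and u : [Φ x]) and, modulo this equality of families, γ[ι] = α. -/

import Mathlib

/-! `G` is obtained by realigning the Glue type
`{(a, b) : ((u : Φ x) → A ⟨x, u⟩) × B x // ∀ u, f x u (a u) = b}`, which is isomorphic to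
`A ⟨x, u⟩` whenever `u : Φ x`, along these isomorphisms (ax9).
To compose in the Glue type, compose the `B`-components and then, at the target point, extend
the partial `A`-component: contracting the fibre of the equivalence `f` and filling with the
connection yields a total `a` together with a path from `f a` to the composite in `B`, and
composing backwards along these paths corrects the `B`-component. -/

namespace CCHM

variable {I : Type}

/-- The two endpoints of the interval: `false ↦ i0`, `true ↦ i1`;
negation `!e` swaps the endpoints. -/
def pt (i0 i1 : I) : Bool → I := fun e => bif e then i1 else i0

/-- A composition structure for an `I`-indexed family of types:
any cofibrant partial path extended at endpoint `e` is extended at the other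
endpoint `!e`. -/
def Comp (i0 i1 : I) (cof : Prop → Prop) (e : Bool) (A : I → Type) : Type :=
  (φ : Prop) → cof φ → (f : φ → (i : I) → A i) →
    (a0 : A (pt i0 i1 e)) → (∀ u : φ, f u (pt i0 i1 e) = a0) →
    { a1 : A (pt i0 i1 (!e)) // ∀ u : φ, f u (pt i0 i1 (!e)) = a1 }

/-- A (CCHM) fibration structure on a family `A : Γ → Type`. -/
def isFib (i0 i1 : I) (cof : Prop → Prop) {Γ : Type} (A : Γ → Type) : Type :=
  (e : Bool) → (p : I → Γ) → Comp i0 i1 cof e (fun i => A (p i))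

/-- Reindexing of fibration structures: `α[γ] e p := α e (γ ∘ p)`. -/
def reind (i0 i1 : I) (cof : Prop → Prop) {Δ Γ : Type} {A : Γ → Type}
    (γ : Δ → Γ) (α : isFib i0 i1 cof A) : isFib i0 i1 cof (fun x => A (γ x)) :=
  fun e p => α e (fun i => γ (p i))

/-- The type of paths from `a0` to `a1` in `X`. -/
def PathT (i0 i1 : I) (X : Type) (a0 a1 : X) : Type :=
  { p : I → X // p i0 = a0 ∧ p i1 = a1 }

/-- Contractibility structure. -/
def Contr (i0 i1 : I) (X : Type) : Type :=
  Σ x0 : X, (x : X) → PathT i0 i1 X x0 x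

/-- Equivalence structure on a function: all its path-fibres are contractible. -/
def EquivStr (i0 i1 : I) {X Y : Type} (f : X → Y) : Type :=
  (y : Y) → Contr i0 i1 (Σ x : X, PathT i0 i1 Y (f x) y)

section

variable {i0 i1 : I} {cof : Prop → Prop}

@[simp] theorem pt_false : pt i0 i1 false = i0 := rfl

@[simp] theorem pt_true : pt i0 i1 true = i1 := rfl

def Comp.ofEquiv {e : Bool} {X Y : I → Type} (σ : (i : I) → X i ≃ Y i)
    (c : Comp i0 i1 cof e Y) : Comp i0 i1 cof e X :=
  fun φ hφ g a₀ hg =>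
    let r := c φ hφ (fun u i => σ i (g u i)) (σ _ a₀) (fun u => congrArg (σ _) (hg u))
    ⟨(σ _).symm r.1, fun u => by rw [← r.2 u, Equiv.symm_apply_apply]⟩

theorem Comp.exists_path_extending {X : Type} (c : Comp i0 i1 cof false (fun _ => X))
    (cnx : I → I → I) (hcnx₀ : ∀ x, cnx i0 x = i0) (hcnx₁ : ∀ x, cnx i1 x = x)
    (hcof₀ : ∀ i : I, cof (i = i0))
    (hcof_or : ∀ φ ψ : Prop, cof φ → cof ψ → cof (φ ∨ ψ))
    {ψ : Prop} (hψ : cof ψ) (x₀ : X) (ρ : ψ → I → X) (hρ : ∀ w, ρ w i0 = x₀) :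
    ∃ r : I → X, r i0 = x₀ ∧ ∀ w, ρ w = r := by
  classical
  -- fill the square `(j, i) ↦ ρ w (cnx j i)` along `j`, with the side `i = i0` constantly `x₀`
  have fill : ∀ i, ∃ a : X,
      ∀ _ : ψ ∨ i = i0, (if hw : ψ then ρ hw (cnx i1 i) else x₀) = a := by
    intro i
    obtain ⟨a, ha⟩ := c (ψ ∨ i = i0) (hcof_or _ _ hψ (hcof₀ i))
      (fun _ j => if hw : ψ then ρ hw (cnx j i) else x₀) x₀
      (fun _ => by split_ifs with hw <;> simp [hcnx₀, hρ])
    exact ⟨a, ha⟩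
  choose r hr using fill
  refine ⟨r, ?_, fun w => funext fun i => by simpa [w, hcnx₁] using hr i (.inl w)⟩
  by_cases hw : ψ
  · simpa [hw, hcnx₁, hρ] using (hr i0 (.inl hw)).symm
  · simpa [hw] using (hr i0 (.inr rfl)).symm

theorem Comp.nonempty_path_of_span {X : Type} (c : Comp i0 i1 cof false (fun _ => X))
    (h01 : i0 ≠ i1) (hcof_eq : ∀ i : I, cof (i = i0) ∧ cof (i = i1))
    (hcof_or : ∀ φ ψ : Prop, cof φ → cof ψ → cof (φ ∨ ψ))
    {a b d : X} (p : PathT i0 i1 X a b) (q : PathT i0 i1 X a d) :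
    Nonempty (PathT i0 i1 X b d) := by
  classical
  have square : ∀ j, ∃ x : X,
      ∀ _ : j = i0 ∨ j = i1, (if j = i0 then p.1 i1 else d) = x := by
    intro j
    obtain ⟨x, hx⟩ := c (j = i0 ∨ j = i1) (hcof_or _ _ (hcof_eq j).1 (hcof_eq j).2)
      (fun _ i => if j = i0 then p.1 i else d) (q.1 j)
      (fun v => by
        rcases v with rfl | rfl
        · simp [p.2.1, q.2.1]
        · simp [Ne.symm h01, q.2.2])
    exact ⟨x, hx⟩
  choose r hr using square
  exact ⟨⟨r, by simpa [p.2.2] using (hr i0 (.inl rfl)).symm,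
    by simpa [Ne.symm h01] using (hr i1 (.inr rfl)).symm⟩⟩

theorem EquivStr.exists_extension {X Y : Type} {f : X → Y} (hf : EquivStr i0 i1 f)
    (cX : Comp i0 i1 cof false (fun _ => X)) (cY : Comp i0 i1 cof false (fun _ => Y))
    (h01 : i0 ≠ i1)
    (cnx : I → I → I) (hcnx₀ : ∀ x, cnx i0 x = i0) (hcnx₁ : ∀ x, cnx i1 x = x)
    (hcof_eq : ∀ i : I, cof (i = i0) ∧ cof (i = i1))
    (hcof_or : ∀ φ ψ : Prop, cof φ → cof ψ → cof (φ ∨ ψ))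
    {ψ : Prop} (hψ : cof ψ) (a : ψ → X) (y : Y) (ha : ∀ w, f (a w) = y) :
    ∃ x : X, (∀ w, a w = x) ∧ Nonempty (PathT i0 i1 Y (f x) y) := by
  obtain ⟨⟨x₀, q⟩, contract⟩ := hf y
  -- each `a w`, with the constant path at `y`, is joined to the centre `⟨x₀, q⟩` of the fibre
  let ρ : ψ → I → X := fun w i =>
    ((contract ⟨a w, fun _ => y, (ha w).symm, rfl⟩).1 i).1
  have hρ₀ : ∀ w, ρ w i0 = x₀ := fun w =>
    congrArg Sigma.fst (contract ⟨a w, fun _ => y, (ha w).symm, rfl⟩).2.1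
  have hρ₁ : ∀ w, ρ w i1 = a w := fun w =>
    congrArg Sigma.fst (contract ⟨a w, fun _ => y, (ha w).symm, rfl⟩).2.2
  obtain ⟨r, hr₀, hρr⟩ :=
    cX.exists_path_extending cnx hcnx₀ hcnx₁ (fun i => (hcof_eq i).1) hcof_or hψ x₀ ρ hρ₀
  refine ⟨r i1, fun w => by rw [← hρ₁ w, hρr w], ?_⟩
  exact cY.nonempty_path_of_span h01 hcof_eq hcof_or ⟨fun i => f (r i), congrArg f hr₀, rfl⟩ q

def Glue (φ : Prop) (A : φ → Type) (B : Type) (f : (u : φ) → A u → B) : Type :=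
  { g : ((u : φ) → A u) × B // ∀ u, f u (g.1 u) = g.2 }

def Glue.equivOfMem {φ : Prop} {A : φ → Type} {B : Type} (f : (u : φ) → A u → B) (u : φ) :
    A u ≃ Glue φ A B f where
  toFun a := ⟨(fun _ => a, f u a), fun _ => rfl⟩
  invFun g := g.1.1 u
  left_inv _ := rfl
  right_inv g := Subtype.ext (Prod.ext rfl (g.2 u))

theorem Glue.exists_extension {φ : Prop} (hφ : cof φ) {A : φ → Type} {B : Type}
    {f : (u : φ) → A u → B} (hf : ∀ u, EquivStr i0 i1 (f u))
    (cA : ∀ u, Comp i0 i1 cof false (fun _ => A u)) (cB : Comp i0 i1 cof false (fun _ => B))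
    (cB' : Comp i0 i1 cof true (fun _ => B))
    (h01 : i0 ≠ i1)
    (cnx : I → I → I) (hcnx₀ : ∀ x, cnx i0 x = i0) (hcnx₁ : ∀ x, cnx i1 x = x)
    (hcof_eq : ∀ i : I, cof (i = i0) ∧ cof (i = i1))
    (hcof_or : ∀ φ ψ : Prop, cof φ → cof ψ → cof (φ ∨ ψ))
    {ψ : Prop} (hψ : cof ψ) (g : ψ → Glue φ A B f) (b : B) (hb : ∀ w, (g w).1.2 = b) :
    ∃ g' : Glue φ A B f, ∀ w, g w = g' := by
  classical
  have extend : ∀ u, ∃ a : A u,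
      (∀ w, (g w).1.1 u = a) ∧ Nonempty (PathT i0 i1 B (f u a) b) := fun u =>
    (hf u).exists_extension (cA u) cB h01 cnx hcnx₀ hcnx₁ hcof_eq hcof_or hψ
      (fun w => (g w).1.1 u) b (fun w => ((g w).2 u).trans (hb w))
  choose a ha hH using extend
  let H : (u : φ) → PathT i0 i1 B (f u (a u)) b := fun u => (hH u).some
  -- compose backwards: constantly `b` on `ψ`, along `H u` on `φ`
  obtain ⟨b', hb'⟩ := cB' (ψ ∨ φ) (hcof_or _ _ hψ hφ)
    (fun v j => if hw : ψ then b else (H (v.resolve_left hw)).1 j) b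
    (fun v => by split_ifs <;> simp [(H _).2.2])
  have hbb' : ∀ w : ψ, b = b' := fun w => by simpa [w] using hb' (.inl w)
  refine ⟨⟨(a, b'), fun u => ?_⟩, fun w => Subtype.ext (Prod.ext (funext (ha · w)) ?_)⟩
  · show f u (a u) = b'
    by_cases hw : ψ
    · rw [← ha u hw, (g hw).2 u, hb hw, hbb' hw]
    · simpa [hw, (H u).2.1] using hb' (.inr u)
  · exact (hb w).trans (hbb' w)

noncomputable def Glue.isFib {Γ : Type} {Φ : Γ → Prop} (hΦ : ∀ x, cof (Φ x))
    {A : { x : Γ // Φ x } → Type} {B : Γ → Type}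
    {f : (x : Γ) → (u : Φ x) → A ⟨x, u⟩ → B x}
    (hf : (x : Γ) → (u : Φ x) → EquivStr i0 i1 (f x u))
    (α : isFib i0 i1 cof A) (β : isFib i0 i1 cof B)
    (h01 : i0 ≠ i1)
    (cnx : I → I → I) (hcnx₀ : ∀ x, cnx i0 x = i0) (hcnx₁ : ∀ x, cnx i1 x = x)
    (hcof_eq : ∀ i : I, cof (i = i0) ∧ cof (i = i1))
    (hcof_or : ∀ φ ψ : Prop, cof φ → cof ψ → cof (φ ∨ ψ)) :
    isFib i0 i1 cof (fun x => Glue (Φ x) (fun u => A ⟨x, u⟩) (B x) (f x)) :=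
  fun e p ψ hψ g g₀ hg₀ =>
    let b := β e p ψ hψ (fun w i => (g w i).1.2) g₀.1.2 (fun w => by rw [hg₀ w])
    Classical.indefiniteDescription _ <|
      Glue.exists_extension (hΦ _) (hf _) (fun u => α false fun _ => ⟨_, u⟩)
        (β false fun _ => _) (β true fun _ => _) h01 cnx hcnx₀ hcnx₁ hcof_eq hcof_or hψ
        (fun w => g w _) b.1 b.2

end

theorem glue_cwf_general (i0 i1 : I) (cof : Prop → Prop)
    (ax2 : i0 ≠ i1)
    (cnx : I → I → I)
    (ax3 : ∀ x, cnx i0 x = i0 ∧ cnx x i0 = i0 ∧ cnx i1 x = x ∧ cnx x i1 = x)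
    (ax5 : ∀ i : I, cof (i = i0) ∧ cof (i = i1))
    (ax6 : ∀ φ ψ : Prop, cof φ → cof ψ → cof (φ ∨ ψ))
    (ax9 : ∀ (φ : Prop), cof φ → ∀ (A : φ → Type) (B : Type)
      (s : (u : φ) → A u ≃ B),
      ∃ (B' : Type) (s' : B' ≃ B), ∀ u : φ, ∃ _h : A u = B', HEq (s u) s')
    (Γ : Type) (Φ : Γ → Prop) (hΦ : ∀ x, cof (Φ x))
    (A : { x : Γ // Φ x } → Type) (B : Γ → Type)
    (f : (x : Γ) → (u : Φ x) → A ⟨x, u⟩ → B x)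
    (eq : (x : Γ) → (u : Φ x) → EquivStr i0 i1 (f x u))
    (α : isFib i0 i1 cof A) (β : isFib i0 i1 cof B) :
    ∃ (G : Γ → Type) (γfib : isFib i0 i1 cof G),
      ∃ _h : (fun y : { x : Γ // Φ x } => G y.1) = A,
        HEq (reind i0 i1 cof (fun y : { x : Γ // Φ x } => y.1) γfib) α := by
  classical
  choose G σ hGA using fun x =>
    ax9 (Φ x) (hΦ x) (fun u => A ⟨x, u⟩) _ (Glue.equivOfMem (f x))
  obtain rfl : A = fun y => G y.1 := funext fun y => (hGA y.1 y.2).fst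
  have γGlue := Glue.isFib hΦ eq α β ax2 cnx (fun x => (ax3 x).1) (fun x => (ax3 x).2.2.1)
    ax5 ax6
  -- on paths inside `Φ` we use `α` itself, so that restricting along `ι` gives back `α`
  refine ⟨G, fun e p => if h : ∀ i, Φ (p i) then α e (fun i => ⟨p i, h i⟩)
      else (γGlue e p).ofEquiv fun i => σ (p i), rfl, heq_of_eq ?_⟩
  funext e p
  exact dif_pos fun i => (p i).2

/-- Glueing in the CwF of fibrations: given an equivalence `f` from a fibration
`(A, α)` over `Γ|Φ` to (the restriction of) a fibration `(B, β)` over `Γ`,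
there is a fibration `(G, γ)` over `Γ` whose restriction along
`ι : Γ|Φ ↪ Γ` is exactly `(A, α)`. -/
theorem glue_cwf (i0 i1 : I) (cof : Prop → Prop)
    (ax2 : i0 ≠ i1)
    (cnx dsj : I → I → I)
    (ax3 : ∀ x, cnx i0 x = i0 ∧ cnx x i0 = i0 ∧ cnx i1 x = x ∧ cnx x i1 = x)
    (ax4 : ∀ x, dsj i0 x = x ∧ dsj x i0 = x ∧ dsj i1 x = i1 ∧ dsj x i1 = i1)
    (ax5 : ∀ i : I, cof (i = i0) ∧ cof (i = i1))
    (ax6 : ∀ φ ψ : Prop, cof φ → cof ψ → cof (φ ∨ ψ))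
    (ax8 : ∀ φ : I → Prop, (∀ i, cof (φ i)) → cof (∀ i, φ i))
    (ax9 : ∀ (φ : Prop), cof φ → ∀ (A : φ → Type) (B : Type)
      (s : (u : φ) → A u ≃ B),
      ∃ (B' : Type) (s' : B' ≃ B), ∀ u : φ, ∃ _h : A u = B', HEq (s u) s')
    (Γ : Type) (Φ : Γ → Prop) (hΦ : ∀ x, cof (Φ x))
    (A : { x : Γ // Φ x } → Type) (B : Γ → Type)
    (f : (x : Γ) → (u : Φ x) → A ⟨x, u⟩ → B x)
    (eq : (x : Γ) → (u : Φ x) → EquivStr i0 i1 (f x u))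
    (α : isFib i0 i1 cof A) (β : isFib i0 i1 cof B) :
    ∃ (G : Γ → Type) (γfib : isFib i0 i1 cof G),
      ∃ _h : (fun y : { x : Γ // Φ x } => G y.1) = A,
        HEq (reind i0 i1 cof (fun y : { x : Γ // Φ x } => y.1) γfib) α :=
  glue_cwf_general i0 i1 cof ax2 cnx ax3 ax5 ax6 ax9 Γ Φ hΦ A B f eq α β

end CCHM
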